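/- arXiv:2512.07296 — 3 statements merged into one kernel-verified Lean document; each statement's English description precedes it below -/
import Mathlib

section
/- For any H ∈ (0,1), the function γ(s,t) = (1/2)(|s|^{2H} + |t|^{2H} - |t-s|^{2H}) is positive semidefinite on ℝ × ℝ, i.e., for any t_1,...,t_n ∈ ℝ and real coefficients c_1,...,c_n, the sum Σ_{i,j} c_i c_j γ(t_i, t_j) ≥ 0. -/
open MeasureTheory Real Set
open scoped ENNReal

namespace FBMAux

lemma one_sub_cos_nonneg (x : ℝ) : 0 ≤ 1 - Real.cos x := by
  have := Real.cos_le_one x; linarith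

lemma one_sub_cos_le (x : ℝ) : 1 - Real.cos x ≤ x ^ 2 / 2 := by
  have h := Real.cos_two_mul (x / 2)
  have h2 : 2 * (x / 2) = x := by ring
  rw [h2] at h
  have hs := Real.sin_sq_add_cos_sq (x / 2)
  have habs : |Real.sin (x / 2)| ≤ |x / 2| := Real.abs_sin_le_abs
  nlinarith [sq_abs (Real.sin (x / 2)), sq_abs (x / 2), abs_nonneg (x / 2),
    abs_nonneg (Real.sin (x / 2)),
    mul_self_le_mul_self (abs_nonneg (Real.sin (x / 2))) habs]

/-- The kernel `(1 - cos(xu)) u^{-(1+α)}` is integrable on `(0,∞)` for `0 < α < 2`. -/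
lemma integrable_kernel {α : ℝ} (hα0 : 0 < α) (hα2 : α < 2) (x : ℝ) :
    IntegrableOn (fun u : ℝ => (1 - Real.cos (x * u)) * u ^ (-(1 + α))) (Ioi 0) := by
  have hmeas : Measurable fun u : ℝ => (1 - Real.cos (x * u)) * u ^ (-(1 + α)) := by
    exact (measurable_const.sub ((measurable_const.mul measurable_id).cos)).mul
      (measurable_id.pow_const _)
  have h1 : IntegrableOn (fun u : ℝ => (1 - Real.cos (x * u)) * u ^ (-(1 + α))) (Ioc 0 1) := by
    have hint : IntegrableOn (fun u : ℝ => x ^ 2 / 2 * u ^ (1 - α)) (Ioc 0 1) := by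
      have := (intervalIntegral.intervalIntegrable_rpow' (a := 0) (b := 1) (r := 1 - α) (by linarith))
      rw [intervalIntegrable_iff_integrableOn_Ioc_of_le (by norm_num)] at this
      exact this.const_mul _
    refine hint.integrable.mono hmeas.aestronglyMeasurable ?_
    filter_upwards [ae_restrict_mem measurableSet_Ioc] with u hu
    have hu0 : 0 < u := hu.1
    have hb : 0 ≤ 1 - Real.cos (x * u) := one_sub_cos_nonneg _
    have hw : (0:ℝ) ≤ u ^ (-(1 + α)) := Real.rpow_nonneg hu0.le _
    rw [Real.norm_eq_abs, Real.norm_eq_abs, abs_of_nonneg (mul_nonneg hb hw)]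
    have hle : 1 - Real.cos (x * u) ≤ (x * u) ^ 2 / 2 := one_sub_cos_le _
    have key : (x * u) ^ 2 / 2 * u ^ (-(1 + α)) = x ^ 2 / 2 * u ^ (1 - α) := by
      have : u ^ (1 - α) = u ^ (2 : ℝ) * u ^ (-(1 + α)) := by
        rw [← Real.rpow_add hu0]; congr 1; ring
      rw [this, Real.rpow_two]
      ring
    calc (1 - Real.cos (x * u)) * u ^ (-(1 + α))
        ≤ (x * u) ^ 2 / 2 * u ^ (-(1 + α)) := by
          exact mul_le_mul_of_nonneg_right hle hw
      _ = x ^ 2 / 2 * u ^ (1 - α) := key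
      _ ≤ |x ^ 2 / 2 * u ^ (1 - α)| := le_abs_self _
  have h2 : IntegrableOn (fun u : ℝ => (1 - Real.cos (x * u)) * u ^ (-(1 + α))) (Ioi 1) := by
    have hint : IntegrableOn (fun u : ℝ => 2 * u ^ (-(1 + α))) (Ioi 1) :=
      (integrableOn_Ioi_rpow_of_lt (by linarith) one_pos).const_mul 2
    refine hint.integrable.mono hmeas.aestronglyMeasurable ?_
    filter_upwards [ae_restrict_mem measurableSet_Ioi] with u hu
    have hu0 : (0:ℝ) < u := lt_trans one_pos hu
    have hb : 0 ≤ 1 - Real.cos (x * u) := one_sub_cos_nonneg _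
    have hb2 : 1 - Real.cos (x * u) ≤ 2 := by
      have := Real.neg_one_le_cos (x * u); linarith
    have hw : (0:ℝ) ≤ u ^ (-(1 + α)) := Real.rpow_nonneg hu0.le _
    rw [Real.norm_eq_abs, Real.norm_eq_abs, abs_of_nonneg (mul_nonneg hb hw)]
    calc (1 - Real.cos (x * u)) * u ^ (-(1 + α))
        ≤ 2 * u ^ (-(1 + α)) := mul_le_mul_of_nonneg_right hb2 hw
      _ ≤ |2 * u ^ (-(1 + α))| := le_abs_self _
  have := h1.union h2
  rwa [Set.Ioc_union_Ioi_eq_Ioi (by norm_num : (0:ℝ) ≤ 1)] at this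

/-- Scaling: the kernel integral for `x` equals `|x|^α` times the base integral. -/
lemma kernel_integral_eq {α : ℝ} (hα0 : 0 < α) (hα2 : α < 2) (x : ℝ) :
    ∫ u in Ioi (0:ℝ), (1 - Real.cos (x * u)) * u ^ (-(1 + α)) =
      |x| ^ α * ∫ u in Ioi (0:ℝ), (1 - Real.cos u) * u ^ (-(1 + α)) := by
  rcases eq_or_ne x 0 with rfl | hx
  · simp [Real.zero_rpow hα0.ne']
  · have hb : 0 < |x| := abs_pos.2 hx
    have hcos : ∀ u : ℝ, Real.cos (x * u) = Real.cos (|x| * u) := by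
      intro u
      rcases abs_cases x with ⟨h, _⟩ | ⟨h, _⟩ <;> rw [h]
      rw [neg_mul, Real.cos_neg]
    have step1 : (fun u : ℝ => (1 - Real.cos (x * u)) * u ^ (-(1 + α))) =
        fun u : ℝ => (1 - Real.cos (|x| * u)) * u ^ (-(1 + α)) := by
      funext u; rw [hcos]
    rw [step1]
    have step2 : ∀ u ∈ Ioi (0:ℝ),
        (1 - Real.cos (|x| * u)) * u ^ (-(1 + α)) =
          |x| ^ (1 + α) * ((1 - Real.cos (|x| * u)) * (|x| * u) ^ (-(1 + α))) := by
      intro u hu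
      have hu0 : (0:ℝ) < u := hu
      have h1 : |x| ^ (1 + α) * |x| ^ (-(1 + α)) = 1 := by
        rw [← Real.rpow_add hb, add_neg_cancel, Real.rpow_zero]
      rw [Real.mul_rpow hb.le hu0.le,
        show |x| ^ (1 + α) * ((1 - Real.cos (|x| * u)) * (|x| ^ (-(1 + α)) * u ^ (-(1 + α)))) =
          (|x| ^ (1 + α) * |x| ^ (-(1 + α))) * ((1 - Real.cos (|x| * u)) * u ^ (-(1 + α))) from by
            ring, h1, one_mul]
    rw [setIntegral_congr_fun measurableSet_Ioi step2, integral_const_mul _ _]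
    rw [integral_comp_mul_left_Ioi
      (fun v => (1 - Real.cos v) * v ^ (-(1 + α))) 0 hb]
    rw [mul_zero, smul_eq_mul]
    rw [← mul_assoc]
    congr 1
    rw [← Real.rpow_neg_one |x|, ← Real.rpow_add hb]
    congr 1
    ring

/-- The base constant is positive. -/
lemma base_pos {α : ℝ} (hα0 : 0 < α) (hα2 : α < 2) :
    0 < ∫ u in Ioi (0:ℝ), (1 - Real.cos u) * u ^ (-(1 + α)) := by
  have hint : IntegrableOn (fun u : ℝ => (1 - Real.cos u) * u ^ (-(1 + α))) (Ioi 0) := by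
    have := integrable_kernel hα0 hα2 1
    simpa using this
  have hnonneg : (0 : ℝ → ℝ) ≤ᵐ[volume.restrict (Ioi (0:ℝ))]
      fun u : ℝ => (1 - Real.cos u) * u ^ (-(1 + α)) := by
    filter_upwards [ae_restrict_mem measurableSet_Ioi] with u hu
    exact mul_nonneg (one_sub_cos_nonneg _) (Real.rpow_nonneg (le_of_lt hu) _)
  rw [setIntegral_pos_iff_support_of_nonneg_ae hnonneg hint]
  have hsub : Ioo (0:ℝ) π ⊆
      Function.support (fun u : ℝ => (1 - Real.cos u) * u ^ (-(1 + α))) ∩ Ioi 0 := by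
    intro u hu
    have hu0 : 0 < u := hu.1
    have hcos : 0 < 1 - Real.cos u := by
      have hs : 0 < Real.sin (u / 2) := Real.sin_pos_of_pos_of_lt_pi (by linarith)
        (by have := Real.pi_pos; linarith [hu.2])
      have h := Real.cos_two_mul (u / 2)
      have h2 : 2 * (u / 2) = u := by ring
      rw [h2] at h
      nlinarith [Real.sin_sq_add_cos_sq (u / 2)]
    have hw : 0 < u ^ (-(1 + α)) := Real.rpow_pos_of_pos hu0 _
    exact ⟨by simp only [Function.mem_support]; positivity, hu0⟩
  calc (0:ℝ≥0∞) < volume (Ioo (0:ℝ) π) := by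
        rw [Real.volume_Ioo]
        simp [ENNReal.ofReal_pos, Real.pi_pos]
    _ ≤ _ := measure_mono hsub

lemma sum_identity (n : ℕ) (t c : Fin n → ℝ) (u : ℝ) :
    ∑ i, ∑ j, c i * c j *
      ((1 - Real.cos (t i * u)) + (1 - Real.cos (t j * u))
        - (1 - Real.cos ((t j - t i) * u))) =
    (∑ i, c i * (1 - Real.cos (t i * u))) ^ 2 + (∑ i, c i * Real.sin (t i * u)) ^ 2 := by
  rw [sq, sq, Finset.sum_mul_sum, Finset.sum_mul_sum, ← Finset.sum_add_distrib]
  refine Finset.sum_congr rfl fun i _ => ?_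
  rw [← Finset.sum_add_distrib]
  refine Finset.sum_congr rfl fun j _ => ?_
  have hc : Real.cos ((t j - t i) * u) =
      Real.cos (t j * u) * Real.cos (t i * u) + Real.sin (t j * u) * Real.sin (t i * u) := by
    rw [sub_mul, Real.cos_sub]
  rw [hc]; ring

end FBMAux

/-- The covariance function of fractional Brownian motion,
`γ(s,t) = (1/2)(|s|^{2H} + |t|^{2H} - |t-s|^{2H})`, is positive semidefinite on `ℝ × ℝ`. -/
theorem fBm_covariance_posSemidef
    (H : ℝ) (hH0 : 0 < H) (hH1 : H < 1)
    (n : ℕ) (t : Fin n → ℝ) (c : Fin n → ℝ) :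
    0 ≤ ∑ i, ∑ j, c i * c j
        * ((1 / 2) * (|t i| ^ (2 * H) + |t j| ^ (2 * H) - |t j - t i| ^ (2 * H))) := by
  set α : ℝ := 2 * H with hα
  have hα0 : 0 < α := by positivity
  have hα2 : α < 2 := by simp only [hα]; linarith
  set μ : Measure ℝ := volume.restrict (Ioi 0) with hμ
  set k : ℝ → ℝ → ℝ := fun x u => (1 - Real.cos (x * u)) * u ^ (-(1 + α)) with hk
  have hkint : ∀ x : ℝ, Integrable (k x) μ := fun x => FBMAux.integrable_kernel hα0 hα2 x
  set f : ℝ → ℝ := fun x => ∫ u, k x u ∂μ with hf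
  set C : ℝ := ∫ u in Ioi (0:ℝ), (1 - Real.cos u) * u ^ (-(1 + α)) with hC
  have hCpos : 0 < C := FBMAux.base_pos hα0 hα2
  have key : ∀ x : ℝ, |x| ^ α = C⁻¹ * f x := by
    intro x
    have := FBMAux.kernel_integral_eq hα0 hα2 x
    have hfx : f x = |x| ^ α * C := this
    rw [hfx]
    field_simp
  -- rewrite the summand
  have hrw : ∀ i j, c i * c j
        * ((1 / 2) * (|t i| ^ (2 * H) + |t j| ^ (2 * H) - |t j - t i| ^ (2 * H)))
      = (C⁻¹ * (1 / 2)) * (c i * c j * (f (t i) + f (t j) - f (t j - t i))) := by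
    intro i j
    rw [show (2 * H) = α from rfl, key (t i), key (t j), key (t j - t i)]
    ring
  simp_rw [← hα] at hrw
  simp_rw [hrw, ← Finset.mul_sum]
  refine mul_nonneg (by positivity) ?_
  -- now show the double sum of `f`-combinations is nonnegative
  have hsummand : ∀ i j : Fin n,
      c i * c j * (f (t i) + f (t j) - f (t j - t i)) =
        ∫ u, c i * c j * (k (t i) u + k (t j) u - k (t j - t i) u) ∂μ := by
    intro i j
    rw [integral_const_mul,
      integral_sub (show Integrable (fun u => k (t i) u + k (t j) u) μ from
        (hkint _).add (hkint _)) (hkint _),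
      integral_add (hkint _) (hkint _)]
  simp_rw [hsummand]
  have hswap : ∀ i : Fin n,
      ∑ j, ∫ u, c i * c j * (k (t i) u + k (t j) u - k (t j - t i) u) ∂μ =
      ∫ u, ∑ j, c i * c j * (k (t i) u + k (t j) u - k (t j - t i) u) ∂μ := by
    intro i
    rw [integral_finset_sum]
    intro j _
    exact (((hkint _).add (hkint _)).sub (hkint _)).const_mul _
  simp_rw [hswap]
  rw [← integral_finset_sum _ (fun i _ => by
    apply integrable_finset_sum
    intro j _
    exact (((hkint _).add (hkint _)).sub (hkint _)).const_mul _)]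
  refine integral_nonneg_of_ae ?_
  filter_upwards [ae_restrict_mem measurableSet_Ioi] with u hu
  have hu0 : (0:ℝ) < u := hu
  have hw : (0:ℝ) ≤ u ^ (-(1 + α)) := Real.rpow_nonneg hu0.le _
  have hptwise : ∑ i, ∑ j, c i * c j * (k (t i) u + k (t j) u - k (t j - t i) u) =
      (∑ i, ∑ j, c i * c j *
        ((1 - Real.cos (t i * u)) + (1 - Real.cos (t j * u))
          - (1 - Real.cos ((t j - t i) * u)))) * u ^ (-(1 + α)) := by
    rw [Finset.sum_mul]
    refine Finset.sum_congr rfl fun i _ => ?_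
    rw [Finset.sum_mul]
    refine Finset.sum_congr rfl fun j _ => ?_
    simp only [hk]
    ring
  rw [hptwise, FBMAux.sum_identity]
  positivity
end

section
/- For any H ∈ (0,1), the function C(s,t) = t^{2H} + s^{2H} - (1/2)((t+s)^{2H} + |t-s|^{2H}) is positive semidefinite on [0,∞) × [0,∞). -/
open MeasureTheory Real Set

lemma sfbm_meas (α a : ℝ) :
    AEStronglyMeasurable (fun u : ℝ => (1 - Real.cos (a * u)) * u ^ (-1 - α))
      (volume.restrict (Ioi (0:ℝ))) := by
  apply Measurable.aestronglyMeasurable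
  fun_prop

lemma sfbm_integrable (α : ℝ) (h0 : 0 < α) (h2 : α < 2) (a : ℝ) :
    IntegrableOn (fun u : ℝ => (1 - Real.cos (a * u)) * u ^ (-1 - α)) (Ioi (0:ℝ)) := by
  have hmeas := sfbm_meas α a
  rw [← Ioc_union_Ioi_eq_Ioi (zero_le_one : (0:ℝ) ≤ 1)]
  apply IntegrableOn.union
  · -- on Ioc 0 1, bound by (a^2/2) * u^(1-α)
    have hint : IntegrableOn (fun u : ℝ => a ^ 2 / 2 * u ^ (1 - α)) (Ioc (0:ℝ) 1) := by
      rw [integrableOn_Ioc_iff_integrableOn_Ioo]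
      exact ((intervalIntegral.integrableOn_Ioo_rpow_iff zero_lt_one).2 (by linarith)).const_mul _
    refine Integrable.mono' hint (hmeas.mono_set Ioc_subset_Ioi_self) ?_
    filter_upwards [ae_restrict_mem measurableSet_Ioc] with u hu
    have hu0 : (0:ℝ) < u := hu.1
    have h1 : 0 ≤ 1 - Real.cos (a * u) := by linarith [Real.cos_le_one (a * u)]
    have h2' : 1 - Real.cos (a * u) ≤ (a * u) ^ 2 / 2 := by
      linarith [Real.one_sub_sq_div_two_le_cos (x := a * u)]
    rw [norm_mul, norm_of_nonneg h1, norm_of_nonneg (rpow_nonneg hu0.le _)]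
    have : u ^ (1 - α) = u ^ (2:ℝ) * u ^ (-1 - α) := by
      rw [← rpow_add hu0]; congr 1; ring
    rw [this, rpow_two]
    calc (1 - Real.cos (a * u)) * u ^ (-1 - α) ≤ (a * u) ^ 2 / 2 * u ^ (-1 - α) := by
          apply mul_le_mul_of_nonneg_right h2' (rpow_nonneg hu0.le _)
      _ = a ^ 2 / 2 * (u ^ 2 * u ^ (-1 - α)) := by ring
  · -- on Ioi 1, bound by 2 * u^(-1-α)
    have hint : IntegrableOn (fun u : ℝ => 2 * u ^ (-1 - α)) (Ioi (1:ℝ)) :=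
      (integrableOn_Ioi_rpow_of_lt (by linarith) zero_lt_one).const_mul _
    refine Integrable.mono' hint (hmeas.mono_set (Ioi_subset_Ioi zero_le_one)) ?_
    filter_upwards [ae_restrict_mem measurableSet_Ioi] with u hu
    have hu0 : (0:ℝ) < u := lt_trans zero_lt_one hu
    have h1 : 0 ≤ 1 - Real.cos (a * u) := by linarith [Real.cos_le_one (a * u)]
    rw [norm_mul, norm_of_nonneg h1, norm_of_nonneg (rpow_nonneg hu0.le _)]
    apply mul_le_mul_of_nonneg_right ?_ (rpow_nonneg hu0.le _)
    linarith [Real.neg_one_le_cos (a * u)]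

lemma sfbm_rep (α : ℝ) (h0 : 0 < α) (a : ℝ) :
    ∫ u in Ioi (0:ℝ), (1 - Real.cos (a * u)) * u ^ (-1 - α)
      = |a| ^ α * ∫ u in Ioi (0:ℝ), (1 - Real.cos u) * u ^ (-1 - α) := by
  -- first handle a = 0
  rcases eq_or_ne a 0 with rfl | ha0
  · simp [Real.zero_rpow h0.ne']
  -- reduce to |a| > 0 using evenness of cos
  have habs : ∀ u : ℝ, Real.cos (a * u) = Real.cos (|a| * u) := by
    intro u
    rcases abs_choice a with h | h
    · rw [h]
    · rw [h]; rw [neg_mul, Real.cos_neg]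
  have hb : 0 < |a| := abs_pos.mpr ha0
  set b := |a| with hbdef
  have : (fun u : ℝ => (1 - Real.cos (a * u)) * u ^ (-1 - α))
      = fun u : ℝ => (1 - Real.cos (b * u)) * u ^ (-1 - α) := by
    funext u; rw [habs u]
  rw [this]
  -- substitution u ↦ b * u
  have key : (fun u : ℝ => (1 - Real.cos (b * u)) * u ^ (-1 - α))
      = fun u : ℝ => (fun v : ℝ => (1 - Real.cos v) * (v / b) ^ (-1 - α)) (b * u) := by
    funext u
    simp only []
    rw [mul_div_cancel_left₀ _ hb.ne']
  rw [key, MeasureTheory.integral_comp_mul_left_Ioi (fun v : ℝ => (1 - Real.cos v) * (v / b) ^ (-1 - α)) 0 hb, mul_zero]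
  rw [smul_eq_mul]
  have congr1 : ∫ v in Ioi (0:ℝ), (1 - Real.cos v) * (v / b) ^ (-1 - α)
      = ∫ v in Ioi (0:ℝ), b ^ (1 + α) * ((1 - Real.cos v) * v ^ (-1 - α)) := by
    apply setIntegral_congr_fun measurableSet_Ioi
    intro v hv
    have hv0 : (0:ℝ) < v := hv
    simp only []
    show (1 - Real.cos v) * (v / b) ^ (-1 - α) = b ^ (1 + α) * ((1 - Real.cos v) * v ^ (-1 - α))
    rw [div_rpow hv0.le hb.le]
    rw [div_eq_mul_inv, ← rpow_neg hb.le]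
    ring_nf
  rw [congr1, integral_const_mul]
  rw [← mul_assoc]
  congr 1
  rw [← rpow_neg_one b, ← rpow_add hb]
  congr 1
  ring

lemma sfbm_K_pos (α : ℝ) (h0 : 0 < α) (h2 : α < 2) :
    0 < ∫ u in Ioi (0:ℝ), (1 - Real.cos u) * u ^ (-1 - α) := by
  have hint : IntegrableOn (fun u : ℝ => (1 - Real.cos u) * u ^ (-1 - α)) (Ioi (0:ℝ)) := by
    have := sfbm_integrable α h0 h2 1
    simpa using this
  have hnonneg : 0 ≤ᵐ[volume.restrict (Ioi (0:ℝ))]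
      fun u : ℝ => (1 - Real.cos u) * u ^ (-1 - α) := by
    filter_upwards [ae_restrict_mem measurableSet_Ioi] with u hu
    have hu0 : (0:ℝ) < u := hu
    exact mul_nonneg (by linarith [Real.cos_le_one u]) (rpow_nonneg hu0.le _)
  set c : ℝ := (π + π / 2) ^ (-1 - α) with hc
  have hπ := Real.pi_pos
  have hc0 : 0 < c := rpow_pos_of_pos (by linarith) _
  have hmono : ∫ u in Ioc (π/2) (π + π/2), (1 - Real.cos u) * u ^ (-1 - α)
      ≤ ∫ u in Ioi (0:ℝ), (1 - Real.cos u) * u ^ (-1 - α) := by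
    apply setIntegral_mono_set hint hnonneg
    filter_upwards with u hu
    exact lt_trans (by linarith) hu.1
  have hlower : c * (volume (Ioc (π/2) (π + π/2))).toReal
      ≤ ∫ u in Ioc (π/2) (π + π/2), (1 - Real.cos u) * u ^ (-1 - α) := by
    apply setIntegral_ge_of_const_le_real measurableSet_Ioc
    · exact (measure_Ioc_lt_top).ne
    · intro u hu
      have hu0 : (0:ℝ) < u := lt_trans (by linarith) hu.1
      have hcos : Real.cos u ≤ 0 :=
        Real.cos_nonpos_of_pi_div_two_le_of_le hu.1.le (by linarith [hu.2])
      have h1 : (1:ℝ) ≤ 1 - Real.cos u := by linarith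
      have h2' : c ≤ u ^ (-1 - α) :=
        rpow_le_rpow_of_nonpos hu0 hu.2 (by linarith)
      calc c ≤ u ^ (-1 - α) := h2'
        _ = 1 * u ^ (-1 - α) := (one_mul _).symm
        _ ≤ (1 - Real.cos u) * u ^ (-1 - α) :=
            mul_le_mul_of_nonneg_right h1 (rpow_nonneg hu0.le _)
    · exact hint.mono_set (fun u hu => lt_trans (by linarith [hu.1]) hu.1)
  have hvol : (volume (Ioc (π/2) (π + π/2))).toReal = π := by
    rw [Real.volume_Ioc, ENNReal.toReal_ofReal (by linarith)]
    ring
  rw [hvol] at hlower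
  have : 0 < c * π := mul_pos hc0 hπ
  linarith

lemma sfbm_pair (α : ℝ) (h0 : 0 < α) (h2 : α < 2) (s t : ℝ) (hs : 0 ≤ s) (ht : 0 ≤ t) :
    ∫ u in Ioi (0:ℝ), ((1 - Real.cos (s * u)) * (1 - Real.cos (t * u))) * u ^ (-1 - α)
      = (t ^ α + s ^ α - (1/2) * ((t + s) ^ α + |t - s| ^ α))
        * ∫ u in Ioi (0:ℝ), (1 - Real.cos u) * u ^ (-1 - α) := by
  have hpt : ∀ u : ℝ, ((1 - Real.cos (s * u)) * (1 - Real.cos (t * u))) * u ^ (-1 - α)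
      = ((1 - Real.cos (s * u)) * u ^ (-1 - α) + (1 - Real.cos (t * u)) * u ^ (-1 - α))
        - ((1/2) * ((1 - Real.cos ((s + t) * u)) * u ^ (-1 - α))
            + (1/2) * ((1 - Real.cos ((s - t) * u)) * u ^ (-1 - α))) := by
    intro u
    have h1 : Real.cos ((s + t) * u)
        = Real.cos (s*u) * Real.cos (t*u) - Real.sin (s*u) * Real.sin (t*u) := by
      rw [add_mul, Real.cos_add]
    have h2' : Real.cos ((s - t) * u)
        = Real.cos (s*u) * Real.cos (t*u) + Real.sin (s*u) * Real.sin (t*u) := by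
      rw [sub_mul, Real.cos_sub]
    rw [h1, h2']; ring
  rw [setIntegral_congr_fun measurableSet_Ioi (fun u _ => hpt u)]
  have hA := sfbm_integrable α h0 h2 s
  have hB := sfbm_integrable α h0 h2 t
  have hC := sfbm_integrable α h0 h2 (s + t)
  have hD := sfbm_integrable α h0 h2 (s - t)
  have step : ∫ x in Ioi (0:ℝ),
      ((1 - Real.cos (s * x)) * x ^ (-1 - α) + (1 - Real.cos (t * x)) * x ^ (-1 - α)
        - ((1/2) * ((1 - Real.cos ((s + t) * x)) * x ^ (-1 - α))
            + (1/2) * ((1 - Real.cos ((s - t) * x)) * x ^ (-1 - α))))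
      = (∫ x in Ioi (0:ℝ), (1 - Real.cos (s * x)) * x ^ (-1 - α))
        + (∫ x in Ioi (0:ℝ), (1 - Real.cos (t * x)) * x ^ (-1 - α))
        - ((1/2) * (∫ x in Ioi (0:ℝ), (1 - Real.cos ((s + t) * x)) * x ^ (-1 - α))
            + (1/2) * (∫ x in Ioi (0:ℝ), (1 - Real.cos ((s - t) * x)) * x ^ (-1 - α))) := by
    have hAB : Integrable (fun x : ℝ => (1 - Real.cos (s * x)) * x ^ (-1 - α)
        + (1 - Real.cos (t * x)) * x ^ (-1 - α)) (volume.restrict (Ioi 0)) := hA.add hB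
    have hCD : Integrable (fun x : ℝ => (1/2) * ((1 - Real.cos ((s + t) * x)) * x ^ (-1 - α))
        + (1/2) * ((1 - Real.cos ((s - t) * x)) * x ^ (-1 - α))) (volume.restrict (Ioi 0)) :=
      (hC.const_mul _).add (hD.const_mul _)
    simp only [integral_sub hAB hCD, integral_add hA hB,
      integral_add (hC.const_mul (1/2:ℝ)) (hD.const_mul (1/2:ℝ)), integral_const_mul]
  rw [step, sfbm_rep α h0 s, sfbm_rep α h0 t, sfbm_rep α h0 (s + t), sfbm_rep α h0 (s - t),
    abs_of_nonneg hs, abs_of_nonneg ht, abs_of_nonneg (by linarith : 0 ≤ s + t),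
    abs_sub_comm s t]
  have hcomm : s + t = t + s := by ring
  rw [hcomm]; ring

/-- The covariance function of sub-fractional Brownian motion,
`C(s,t) = t^{2H} + s^{2H} - (1/2)((t+s)^{2H} + |t-s|^{2H})`,
is positive semidefinite on `[0,∞) × [0,∞)`. -/
theorem sfBm_covariance_posSemidef
    (H : ℝ) (hH0 : 0 < H) (hH1 : H < 1)
    (n : ℕ) (t : Fin n → ℝ) (ht : ∀ i, 0 ≤ t i) (c : Fin n → ℝ) :
    0 ≤ ∑ i, ∑ j, c i * c j
        * (t j ^ (2 * H) + t i ^ (2 * H)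
            - (1 / 2) * ((t j + t i) ^ (2 * H) + |t j - t i| ^ (2 * H))) := by
  set α : ℝ := 2 * H with hα
  have h0 : 0 < α := by positivity
  have h2 : α < 2 := by simp only [hα]; linarith
  set K : ℝ := ∫ u in Ioi (0:ℝ), (1 - Real.cos u) * u ^ (-1 - α) with hK
  have hKpos : 0 < K := sfbm_K_pos α h0 h2
  -- integrability of products
  have hprod : ∀ i j : Fin n, IntegrableOn
      (fun u : ℝ => ((1 - Real.cos (t i * u)) * (1 - Real.cos (t j * u))) * u ^ (-1 - α))
      (Ioi (0:ℝ)) := by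
    intro i j
    refine Integrable.mono' ((sfbm_integrable α h0 h2 (t j)).const_mul 2) ?_ ?_
    · apply Measurable.aestronglyMeasurable; fun_prop
    · filter_upwards [ae_restrict_mem measurableSet_Ioi] with u hu
      have hu0 : (0:ℝ) < u := hu
      have hgi : 0 ≤ 1 - Real.cos (t i * u) := by linarith [Real.cos_le_one (t i * u)]
      have hgi2 : 1 - Real.cos (t i * u) ≤ 2 := by linarith [Real.neg_one_le_cos (t i * u)]
      have hgj : 0 ≤ 1 - Real.cos (t j * u) := by linarith [Real.cos_le_one (t j * u)]
      have hw : 0 ≤ u ^ (-1 - α) := rpow_nonneg hu0.le _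
      rw [norm_of_nonneg (by positivity)]
      calc (1 - Real.cos (t i * u)) * (1 - Real.cos (t j * u)) * u ^ (-1 - α)
          ≤ 2 * (1 - Real.cos (t j * u)) * u ^ (-1 - α) := by
            apply mul_le_mul_of_nonneg_right (mul_le_mul_of_nonneg_right hgi2 hgj) hw
        _ = 2 * ((1 - Real.cos (t j * u)) * u ^ (-1 - α)) := by ring
  -- the integral of the square
  have hI : 0 ≤ ∫ u in Ioi (0:ℝ),
      (∑ i, c i * (1 - Real.cos (t i * u))) ^ 2 * u ^ (-1 - α) := by
    apply setIntegral_nonneg measurableSet_Ioi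
    intro u hu
    exact mul_nonneg (sq_nonneg _) (rpow_nonneg (le_of_lt hu) _)
  have hexp : ∫ u in Ioi (0:ℝ),
      (∑ i, c i * (1 - Real.cos (t i * u))) ^ 2 * u ^ (-1 - α)
      = ∑ i, ∑ j, (c i * c j)
        * ∫ u in Ioi (0:ℝ),
            ((1 - Real.cos (t i * u)) * (1 - Real.cos (t j * u))) * u ^ (-1 - α) := by
    have hpt : ∀ u ∈ Ioi (0:ℝ),
        (∑ i, c i * (1 - Real.cos (t i * u))) ^ 2 * u ^ (-1 - α)
        = ∑ i, ∑ j, (c i * c j)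
            * (((1 - Real.cos (t i * u)) * (1 - Real.cos (t j * u))) * u ^ (-1 - α)) := by
      intro u _
      rw [sq, Finset.sum_mul_sum, Finset.sum_mul]
      refine Finset.sum_congr rfl fun i _ => ?_
      rw [Finset.sum_mul]
      exact Finset.sum_congr rfl fun j _ => by ring
    rw [setIntegral_congr_fun measurableSet_Ioi hpt]
    rw [integral_finset_sum _ (fun i _ => integrable_finset_sum _
      (fun j _ => (hprod i j).const_mul _))]
    refine Finset.sum_congr rfl fun i _ => ?_
    rw [integral_finset_sum _ (fun j _ => (hprod i j).const_mul _)]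
    exact Finset.sum_congr rfl fun j _ => integral_const_mul _ _
  rw [hexp] at hI
  have hIK : ∑ i, ∑ j, (c i * c j)
        * ∫ u in Ioi (0:ℝ),
            ((1 - Real.cos (t i * u)) * (1 - Real.cos (t j * u))) * u ^ (-1 - α)
      = (∑ i, ∑ j, c i * c j
        * (t j ^ α + t i ^ α
            - (1 / 2) * ((t j + t i) ^ α + |t j - t i| ^ α))) * K := by
    rw [Finset.sum_mul]
    refine Finset.sum_congr rfl fun i _ => ?_
    rw [Finset.sum_mul]
    refine Finset.sum_congr rfl fun j _ => ?_
    rw [sfbm_pair α h0 h2 (t i) (t j) (ht i) (ht j)]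
    ring
  rw [hIK] at hI
  exact (mul_nonneg_iff_of_pos_right hKpos).mp hI
end

section
/- Let X : [0,1] → ℝ be β-Hölder continuous with constant C and M = sup_{[0,1]}|X|. Then there is a constant c̃ (depending only on C, M, H, β) such that for all n ≥ 2, max_{1≤j≤n} |n^{Hθ_{j,n}/n} X((j/n) n^{-θ_{j,n}/n}) - X(j/n)| ≤ c̃ · n^{-β} (log n)^β, where θ_{j,n} ∈ [0,1) is the fractional part of ((log(j/n)/log n) + 1)n. In particular this maximum tends to 0 as n → ∞. -/
open Filter

/-- Uniform approximation error for the modified inverse Lamperti simulation method: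
if `X : [0,1] → ℝ` is `β`-Hölder with constant `C` and bounded by `M`, then there is a
constant `c̃ > 0` such that for all `n ≥ 2`,
`max_{1≤j≤n} |n^{Hθ_{j,n}/n} X((j/n) n^{-θ_{j,n}/n}) − X(j/n)| ≤ c̃ n^{-β} (log n)^β`,
where `θ_{j,n}` is the fractional part of `((log(j/n)/log n) + 1)n`; in particular the
maximum tends to `0` as `n → ∞`. -/
theorem lamperti_uniform_error_bound
    (X : ℝ → ℝ) (β C M H : ℝ) (hβ0 : 0 < β) (hβ1 : β < 1) (hH0 : 0 < H) (hH1 : H < 1)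
    (hHolder : ∀ s ∈ Set.Icc (0 : ℝ) 1, ∀ t ∈ Set.Icc (0 : ℝ) 1,
      |X s - X t| ≤ C * |s - t| ^ β)
    (hM : ∀ s ∈ Set.Icc (0 : ℝ) 1, |X s| ≤ M) :
    ∃ c : ℝ, 0 < c
      ∧ (∀ n : ℕ, 2 ≤ n → ∀ j : ℕ, 1 ≤ j → j ≤ n →
          |(n : ℝ) ^ (H * Int.fract ((Real.log ((j : ℝ) / n) / Real.log n + 1) * n) / n)
              * X (((j : ℝ) / n)
                  * (n : ℝ) ^ (-(Int.fract ((Real.log ((j : ℝ) / n) / Real.log n + 1) * n) / n)))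
            - X ((j : ℝ) / n)|
            ≤ c * (n : ℝ) ^ (-β) * (Real.log n) ^ β)
      ∧ Tendsto (fun n : ℕ => c * (n : ℝ) ^ (-β) * (Real.log n) ^ β) atTop (nhds 0) := by
  have hM0 : 0 ≤ M := le_trans (abs_nonneg _) (hM 0 (by norm_num))
  have hC0 : 0 ≤ C := by
    have h := hHolder 0 (by norm_num) 1 (by norm_num)
    have h1 : |(0:ℝ) - 1| ^ β = 1 := by
      norm_num
    rw [h1, mul_one] at h
    exact le_trans (abs_nonneg _) h
  refine ⟨3 * M + C + 1, by positivity, ?_, ?_⟩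
  · intro n hn j hj1 hjn
    set θ := Int.fract ((Real.log ((j : ℝ) / n) / Real.log n + 1) * n) with hθdef
    have hθ0 : 0 ≤ θ := Int.fract_nonneg _
    have hθ1 : θ < 1 := (Int.fract_lt_one _)
    have hn2 : (2:ℝ) ≤ (n:ℝ) := by exact_mod_cast hn
    have hnpos : (0:ℝ) < n := by linarith
    set L := Real.log n with hL
    have hL0 : 0 < L := Real.log_pos (by linarith)
    have hLn : L ≤ n := le_trans (Real.log_le_sub_one_of_pos hnpos) (by linarith)
    have hLn1 : L / n ≤ 1 := (div_le_one hnpos).mpr hLn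
    have hLnpos : 0 < L / n := div_pos hL0 hnpos
    set x := (j:ℝ)/n with hx
    have hj1' : (1:ℝ) ≤ (j:ℝ) := by exact_mod_cast hj1
    have hx0 : 0 < x := div_pos (by linarith) hnpos
    have hx1 : x ≤ 1 := by
      rw [hx, div_le_one hnpos]; exact_mod_cast hjn
    set a := (n:ℝ) ^ (H * θ / n) with hadef
    set b := (n:ℝ) ^ (-(θ / n)) with hbdef
    have ha : a = Real.exp (L * (H * θ / n)) := by
      rw [hadef, Real.rpow_def_of_pos hnpos]
    have hb : b = Real.exp (-(L * (θ / n))) := by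
      rw [hbdef, Real.rpow_def_of_pos hnpos]
      congr 1
      ring
    have hu0 : 0 ≤ L * (H * θ / n) := by positivity
    have hu1 : L * (H * θ / n) ≤ L / n := by
      have hHθ : H * θ ≤ 1 := by nlinarith
      calc L * (H * θ / n) = (H * θ) * (L / n) := by ring
        _ ≤ 1 * (L / n) := mul_le_mul_of_nonneg_right hHθ hLnpos.le
        _ = L / n := one_mul _
    have hv1 : L * (θ / n) ≤ L / n := by
      calc L * (θ / n) = θ * (L / n) := by ring
        _ ≤ 1 * (L / n) := by
            apply mul_le_mul_of_nonneg_right hθ1.le hLnpos.le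
        _ = L / n := one_mul _
    -- bound a - 1
    have ha1 : 1 ≤ a := by
      rw [ha]; exact Real.one_le_exp hu0
    have haexp : Real.exp (L * (H * θ / n)) ≤ Real.exp 1 := by
      apply Real.exp_le_exp.mpr
      exact le_trans hu1 hLn1
    have hasub : a - 1 ≤ 3 * (L / n) := by
      -- exp u - 1 ≤ u * exp u
      have key : Real.exp (L * (H * θ / n)) - 1 ≤
          (L * (H * θ / n)) * Real.exp (L * (H * θ / n)) := by
        have h2 := Real.add_one_le_exp (-(L * (H * θ / n)))
        have h3 : Real.exp (-(L * (H * θ / n))) * Real.exp (L * (H * θ / n)) = 1 := by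
          rw [← Real.exp_add]; simp
        nlinarith [Real.exp_pos (L * (H * θ / n))]
      have he3 : Real.exp 1 ≤ 3 := by
        have := Real.exp_one_lt_d9
        linarith
      rw [ha]
      calc Real.exp (L * (H * θ / n)) - 1
          ≤ (L * (H * θ / n)) * Real.exp (L * (H * θ / n)) := key
        _ ≤ (L / n) * 3 := by
            apply mul_le_mul hu1 (le_trans haexp he3) (Real.exp_pos _).le hLnpos.le
        _ = 3 * (L / n) := by ring
    -- bound 1 - b
    have hv0 : 0 ≤ L * (θ / n) := by positivity
    have hb1 : b ≤ 1 := by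
      rw [hb, Real.exp_le_one_iff]
      linarith
    have hbpos : 0 < b := by rw [hb]; exact Real.exp_pos _
    have hbsub : 1 - b ≤ L / n := by
      rw [hb]
      have h2 := Real.add_one_le_exp (-(L * (θ / n)))
      linarith
    -- x * b ∈ [0,1]
    have hxb0 : 0 ≤ x * b := by positivity
    have hxb1 : x * b ≤ 1 := by
      calc x * b ≤ 1 * 1 := mul_le_mul hx1 hb1 hbpos.le one_pos.le
        _ = 1 := one_mul 1
    have hdist : |x * b - x| ≤ L / n := by
      have heq : x * b - x = -(x * (1 - b)) := by ring
      rw [heq, abs_neg, abs_of_nonneg (mul_nonneg hx0.le (by linarith))]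
      calc x * (1 - b) ≤ 1 * (1 - b) :=
            mul_le_mul_of_nonneg_right hx1 (by linarith)
        _ = 1 - b := one_mul _
        _ ≤ L / n := hbsub
    -- Hölder bound
    have hHol : |X (x * b) - X x| ≤ C * (L / n) ^ β := by
      calc |X (x * b) - X x| ≤ C * |x * b - x| ^ β :=
            hHolder _ ⟨hxb0, hxb1⟩ _ ⟨hx0.le, hx1⟩
        _ ≤ C * (L / n) ^ β := by
            apply mul_le_mul_of_nonneg_left _ hC0
            exact Real.rpow_le_rpow (abs_nonneg _) hdist hβ0.le
    -- log n / n ≤ (log n / n)^β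
    have hpow : L / n ≤ (L / n) ^ β := by
      have := Real.rpow_le_rpow_of_exponent_ge hLnpos hLn1 hβ1.le
      rwa [Real.rpow_one] at this
    -- assemble
    have hMb : |X (x * b)| ≤ M := hM _ ⟨hxb0, hxb1⟩
    have hmain : |a * X (x * b) - X x| ≤ (3 * M + C) * (L / n) ^ β := by
      have hsplit : a * X (x * b) - X x = (a - 1) * X (x * b) + (X (x * b) - X x) := by ring
      calc |a * X (x * b) - X x|
          ≤ |(a - 1) * X (x * b)| + |X (x * b) - X x| := by
            rw [hsplit]; exact abs_add_le _ _
        _ ≤ (3 * (L / n)) * M + C * (L / n) ^ β := by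
            apply add_le_add _ hHol
            rw [abs_mul, abs_of_nonneg (by linarith : (0:ℝ) ≤ a - 1)]
            exact mul_le_mul hasub hMb (abs_nonneg _) (by positivity)
        _ ≤ (3 * M) * (L / n) ^ β + C * (L / n) ^ β := by
            have h5 : (3 * (L / n)) * M = (3 * M) * (L / n) := by ring
            have h6 : (3 * M) * (L / n) ≤ (3 * M) * (L / n) ^ β :=
              mul_le_mul_of_nonneg_left hpow (by positivity)
            linarith
        _ = (3 * M + C) * (L / n) ^ β := by ring
    have hrw : (L / n) ^ β = (n:ℝ) ^ (-β) * L ^ β := by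
      rw [Real.div_rpow hL0.le hnpos.le, Real.rpow_neg hnpos.le]
      ring
    calc |a * X (x * b) - X x| ≤ (3 * M + C) * (L / n) ^ β := hmain
      _ ≤ (3 * M + C + 1) * (L / n) ^ β := by
          apply mul_le_mul_of_nonneg_right (by linarith) (by positivity)
      _ = (3 * M + C + 1) * (n:ℝ) ^ (-β) * L ^ β := by rw [hrw]; ring
  · -- limit part
    have h1 : Tendsto (fun y : ℝ => Real.log y / y) atTop (nhds 0) := by
      have := Real.tendsto_pow_log_div_mul_add_atTop 1 0 1 one_ne_zero
      simpa using this
    have h2 : Tendsto (fun n : ℕ => Real.log n / n) atTop (nhds 0) :=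
      h1.comp tendsto_natCast_atTop_atTop
    have h3 : Tendsto (fun n : ℕ => (Real.log n / n) ^ β) atTop (nhds 0) := by
      have := h2.rpow_const (p := β) (Or.inr hβ0.le)
      rwa [Real.zero_rpow hβ0.ne'] at this
    have h4 : Tendsto (fun n : ℕ => (3 * M + C + 1) * (Real.log n / n) ^ β) atTop (nhds 0) := by
      have := h3.const_mul (3 * M + C + 1)
      simpa using this
    apply h4.congr'
    filter_upwards [eventually_ge_atTop 2] with n hn
    have hn2 : (2:ℝ) ≤ (n:ℝ) := by exact_mod_cast hn
    have hnpos : (0:ℝ) < n := by linarith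
    have hL0 : 0 ≤ Real.log n := Real.log_nonneg (by linarith)
    rw [Real.div_rpow hL0 hnpos.le, Real.rpow_neg hnpos.le]
    ring
end
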